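/- arXiv:1009.2229 — 3 statements merged into one kernel-verified Lean document; each statement's English description precedes it below -/
import Mathlib

section
/- Let R be a Noetherian ring and M an Artinian R-module such that Ann_R(0 :_M p) = p for every prime p ⊇ Ann_R(M). Then for every ideal I of R, Cos_R(0 :_M I) = Cos_R(M) ∩ V(I), where Cos denotes co-support and V(I) the primes containing I. -/
/-!
`⊆`: if some `a ∉ p` kills `N`, then `a` acts invertibly on `R_p` and as zero on `N`, so
`Hom(R_p, N) = 0`; hence `p ∈ Cos N` forces `Ann N ⊆ p`, and `Ann (0 :_M I) ⊇ I`.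

`⊇`: for `p ∈ Cos M ∩ V(I)` the module `W = 0 :_M p` lies in `0 :_M I` and has annihilator
exactly `p`. As `W` is Artinian, the smallest of the submodules `s W` (`s ∉ p`) is nonzero and
each of its elements is divisible by every `s ∉ p`. A map `R_p → W` amounts to a family
`(g s)_{s ∉ p}` (the images of `1/s`) with `t • g (s t) = g s`. Divisibility solves every finite
part of this system, and since Artinian modules are linearly compact (directed families of
nonempty cosets meet), a Zorn argument over prescribed values solves all of it.
-/

/-- The co-support of an `R`-module `N`: primes `p` with `Hom_R(R_p, N) ≠ 0`. -/
def coSupport (R : Type*) [CommRing R] (N : Type*) [AddCommGroup N] [Module R N] :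
    Set (PrimeSpectrum R) :=
  {p | Nontrivial (Localization.AtPrime p.asIdeal →ₗ[R] N)}

section

variable {R W : Type*} [CommRing R] [AddCommGroup W] [Module R W]

theorem IsArtinian.iInter_affineSubspace_nonempty [IsArtinian R W] {ι : Type*} [Nonempty ι]
    (A : ι → AffineSubspace R W) (hne : ∀ i, (A i : Set W).Nonempty)
    (hdir : Directed (· ≥ ·) A) : (⋂ i, (A i : Set W)).Nonempty := by
  obtain ⟨_, ⟨i, rfl⟩, hmin⟩ := IsArtinian.set_has_minimal
    (Set.range fun i => (A i).direction) (Set.range_nonempty _)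
  obtain ⟨w, hw⟩ := hne i
  refine ⟨w, Set.mem_iInter.2 fun j => ?_⟩
  obtain ⟨k, hki, hkj⟩ := hdir i j
  have hk : A k = A i := AffineSubspace.eq_of_direction_eq_of_nonempty_of_le
    ((AffineSubspace.direction_le hki).eq_of_not_lt (hmin _ ⟨k, rfl⟩)) (hne k) hki
  exact hkj (hk ▸ hw)

theorem IsArtinian.exists_ne_zero_forall_smul_eq [IsArtinian R W] (S : Submonoid R)
    (hS : ∀ s ∈ S, s ∉ Module.annihilator R W) : ∃ x : W, x ≠ 0 ∧ ∀ s ∈ S, ∃ y, s • y = x := by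
  obtain ⟨_, ⟨s₀, rfl⟩, hmin⟩ := IsArtinian.set_has_minimal
    (Set.range fun s : S => LinearMap.range (LinearMap.lsmul R W s)) (Set.range_nonempty _)
  have hne : LinearMap.range (LinearMap.lsmul R W s₀) ≠ ⊥ := fun h =>
    hS s₀ s₀.2 <| Module.mem_annihilator.2 <| LinearMap.congr_fun (LinearMap.range_eq_bot.1 h)
  obtain ⟨x, ⟨z, rfl⟩, hx⟩ := Submodule.exists_mem_ne_zero_of_ne_bot hne
  refine ⟨_, hx, fun s hs => ?_⟩
  have hle : LinearMap.range (LinearMap.lsmul R W ((⟨s, hs⟩ * s₀ : S) : R)) ≤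
      LinearMap.range (LinearMap.lsmul R W s₀) := by
    rintro _ ⟨y, rfl⟩
    exact ⟨s • y, by simp [mul_smul]⟩
  obtain ⟨y, hy⟩ := (hle.eq_of_not_lt (hmin _ ⟨_, rfl⟩)).symm ▸ LinearMap.mem_range_self _ z
  exact ⟨(s₀ : R) • y, by simpa [mul_smul] using hy⟩

section Compatible

variable (S : Submonoid R)

def compatibleFamilies (F : Finset (S × S)) (K : Finset (S × W)) : AffineSubspace R (S → W) where
  carrier := {g | (∀ q ∈ F, (q.2 : R) • g (q.1 * q.2) = g q.1) ∧ ∀ q ∈ K, g q.1 = q.2}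
  smul_vsub_vadd_mem' c g₁ g₂ g₃ h₁ h₂ h₃ :=
    ⟨fun q hq => by simp [smul_sub, h₁.1 q hq, h₂.1 q hq, h₃.1 q hq, smul_comm (q.2 : R) c],
     fun q hq => by simp [h₁.2 q hq, h₂.2 q hq, h₃.2 q hq]⟩

variable {S}

theorem compatibleFamilies_anti {F F' : Finset (S × S)} {K K' : Finset (S × W)}
    (hF : F ⊆ F') (hK : K ⊆ K') : compatibleFamilies S F' K' ≤ compatibleFamilies S F K :=
  fun _ hg => ⟨fun q hq => hg.1 q (hF hq), fun q hq => hg.2 q (hK hq)⟩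

theorem compatibleFamilies_nonempty
    (hker : RingHom.ker (algebraMap R (Localization S)) ≤ Module.annihilator R W)
    {x : W} (hx : ∀ s ∈ S, ∃ y : W, s • y = x) (F : Finset (S × S)) :
    (compatibleFamilies S F {(1, x)} : Set (S → W)).Nonempty := by
  classical
  let T : Finset S := insert 1 (F.image Prod.fst ∪ F.image fun q => q.1 * q.2)
  obtain ⟨y, hy⟩ := hx _ (∏ e ∈ T, e).2
  -- `d e = (∏ T) / e`, so that `t • d (s t) - d s` is killed by `s`
  let d : S → R := fun e => ∏ a ∈ T.erase e, (a : R)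
  have hd : ∀ e ∈ T, (e : R) * d e = ((∏ e ∈ T, e : S) : R) := fun e he => by
    rw [Submonoid.coe_finsetProd]; exact Finset.mul_prod_erase T _ he
  refine ⟨fun e => d e • y, fun q hq => ?_, ?_⟩
  · have hkill : (q.2 : R) * d (q.1 * q.2) - d q.1 ∈ Module.annihilator R W := by
      refine hker ((IsLocalization.map_eq_zero_iff S _ _).2 ⟨q.1, ?_⟩)
      rw [mul_sub, ← mul_assoc, ← Submonoid.coe_mul,
        hd _ (Finset.mem_insert_of_mem (Finset.mem_union_right _ (Finset.mem_image_of_mem _ hq))),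
        hd _ (Finset.mem_insert_of_mem (Finset.mem_union_left _ (Finset.mem_image_of_mem _ hq))),
        sub_self]
    simpa [sub_smul, mul_smul, sub_eq_zero] using Module.mem_annihilator.1 hkill y
  · simp only [Finset.mem_singleton, forall_eq]
    simpa [← hy] using congrArg (· • y) (hd 1 (Finset.mem_insert_self _ _))

variable (S) in
def IsFinitelySolvable (K : Set (S × W)) : Prop :=
  ∀ (F : Finset (S × S)) (K₀ : Finset (S × W)), ↑K₀ ⊆ K →
    (compatibleFamilies S F K₀ : Set (S → W)).Nonempty

theorem isFinitelySolvable_singleton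
    (hker : RingHom.ker (algebraMap R (Localization S)) ≤ Module.annihilator R W)
    {x : W} (hx : ∀ s ∈ S, ∃ y : W, s • y = x) : IsFinitelySolvable S {((1 : S), x)} :=
  fun F _ hK₀ => (compatibleFamilies_nonempty hker hx F).mono
    (compatibleFamilies_anti subset_rfl (Finset.coe_subset.1 (by rwa [Finset.coe_singleton])))

theorem IsFinitelySolvable.sUnion {c : Set (Set (S × W))} (hc : IsChain (· ⊆ ·) c)
    (hne : c.Nonempty) (h : ∀ K ∈ c, IsFinitelySolvable S K) : IsFinitelySolvable S (⋃₀ c) :=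
  fun F K₀ hK₀ =>
    let ⟨K, hK, hK₀K⟩ :=
      hc.directedOn.exists_mem_subset_of_finite_of_subset_sUnion hne K₀.finite_toSet hK₀
    h K hK F K₀ hK₀K

theorem IsFinitelySolvable.exists_mem_of_maximal [IsArtinian R W] {K : Set (S × W)}
    (hK : Maximal (IsFinitelySolvable S) K) (s : S) : ∃ w, (s, w) ∈ K := by
  classical
  let A (i : Finset (S × S) × {K₀ : Finset (S × W) // ↑K₀ ⊆ K}) : AffineSubspace R W :=
    (compatibleFamilies S i.1 i.2).map (LinearMap.proj s).toAffineMap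
  have hne i : (A i : Set W).Nonempty := by
    simpa [A, AffineSubspace.coe_map] using hK.prop i.1 i.2 i.2.2
  have hdir : Directed (· ≥ ·) A := fun i j =>
    ⟨(i.1 ∪ j.1, ⟨i.2 ∪ j.2, by simpa using ⟨i.2.2, j.2.2⟩⟩),
      AffineSubspace.map_mono _ (compatibleFamilies_anti Finset.subset_union_left
        Finset.subset_union_left),
      AffineSubspace.map_mono _ (compatibleFamilies_anti Finset.subset_union_right
        Finset.subset_union_right)⟩
  have : Nonempty {K₀ : Finset (S × W) // ↑K₀ ⊆ K} := ⟨⟨∅, by simp⟩⟩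
  obtain ⟨w, hw⟩ := IsArtinian.iInter_affineSubspace_nonempty A hne hdir
  refine ⟨w, hK.mem_of_prop_insert fun F K₀ hK₀ => ?_⟩
  have hK₁ : ↑(K₀.erase (s, w)) ⊆ K := by
    rw [Finset.coe_erase, Set.sdiff_subset_iff, Set.singleton_union]
    exact hK₀
  obtain ⟨g, hg, hgs⟩ := Set.mem_iInter.1 hw (F, ⟨_, hK₁⟩)
  refine ⟨g, hg.1, fun q hq => ?_⟩
  by_cases hqw : q = (s, w)
  · subst hqw; exact hgs
  · exact hg.2 q (Finset.mem_erase.2 ⟨hqw, hq⟩)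

theorem exists_compatible_family [IsArtinian R W]
    (hker : RingHom.ker (algebraMap R (Localization S)) ≤ Module.annihilator R W)
    {x : W} (hx : ∀ s ∈ S, ∃ y : W, s • y = x) :
    ∃ g : S → W, g 1 = x ∧ ∀ s t : S, (t : R) • g (s * t) = g s := by
  classical
  obtain ⟨K, hxK, hK⟩ := zorn_subset_nonempty {K | IsFinitelySolvable S K}
    (fun c hc hchain hne => ⟨_, IsFinitelySolvable.sUnion hchain hne hc,
      fun _ => Set.subset_sUnion_of_mem⟩) _ (isFinitelySolvable_singleton hker hx)
  choose g hg using IsFinitelySolvable.exists_mem_of_maximal hK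
  refine ⟨g, ?_, fun s t => ?_⟩
  · obtain ⟨g', -, hg'⟩ := hK.prop ∅ {(1, x), (1, g 1)}
      (by simpa [Set.insert_subset_iff] using ⟨Set.singleton_subset_iff.1 hxK, hg 1⟩)
    simp only [Finset.mem_insert, Finset.mem_singleton, forall_eq_or_imp, forall_eq] at hg'
    exact hg'.2.symm.trans hg'.1
  · obtain ⟨g', hg'F, hg'K⟩ := hK.prop {(s, t)} {(s, g s), (s * t, g (s * t))}
      (by simpa [Set.insert_subset_iff] using ⟨hg s, hg (s * t)⟩)
    simp only [Finset.mem_insert, Finset.mem_singleton, forall_eq_or_imp, forall_eq] at hg'F hg'K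
    rw [← hg'K.1, ← hg'K.2, hg'F]

theorem exists_linearMap_localization_of_compatible
    (hker : RingHom.ker (algebraMap R (Localization S)) ≤ Module.annihilator R W)
    {g : S → W} (hg : ∀ s t : S, (t : R) • g (s * t) = g s) :
    ∃ f : Localization S →ₗ[R] W, f 1 = g 1 := by
  have hscale (a : R) (b t : S) : a • g b = (a * t) • g (b * t) := by rw [mul_smul, hg]
  have hwd (a c : R) (b d : S) (hr : Localization.r S (a, b) (c, d)) : a • g b = c • g d := by
    obtain ⟨e, he⟩ := Localization.r_iff_exists.1 hr
    rw [hscale a b d, hscale c d b, mul_comm d b, ← sub_eq_zero, ← sub_smul]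
    refine Module.mem_annihilator.1 (hker ((IsLocalization.map_eq_zero_iff S _ _).2 ⟨e, ?_⟩)) _
    linear_combination he
  let F (z : Localization S) : W := z.liftOn (fun a b => a • g b) (hwd _ _ _ _)
  have hF (a : R) (b : S) : F (Localization.mk a b) = a • g b := rfl
  refine ⟨{ toFun := F, map_add' := fun z₁ z₂ => ?_, map_smul' := fun r z => ?_ }, ?_⟩
  · induction z₁ using Localization.induction_on with | _ p =>
    induction z₂ using Localization.induction_on with | _ q =>
    rw [Localization.add_mk, hF, hF, hF, hscale p.1 p.2 q.2, hscale q.1 q.2 p.2, mul_comm q.2 p.2,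
      ← add_smul, add_comm, mul_comm (q.2 : R), mul_comm (p.2 : R)]
  · induction z using Localization.induction_on with | _ p =>
    rw [Localization.smul_mk]
    exact mul_smul r p.1 (g p.2)
  · change F 1 = g 1
    rw [← Localization.mk_one, hF, one_smul]

theorem IsArtinian.exists_linearMap_localization_apply_one [IsArtinian R W]
    (hker : RingHom.ker (algebraMap R (Localization S)) ≤ Module.annihilator R W)
    {x : W} (hx : ∀ s ∈ S, ∃ y : W, s • y = x) : ∃ f : Localization S →ₗ[R] W, f 1 = x := by
  obtain ⟨g, rfl, hg⟩ := exists_compatible_family hker hx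
  exact exists_linearMap_localization_of_compatible hker hg

end Compatible

theorem annihilator_le_of_mem_coSupport {p : PrimeSpectrum R} (hp : p ∈ coSupport R W) :
    Module.annihilator R W ≤ p.asIdeal := by
  intro a ha
  by_contra hap
  obtain ⟨u, hu⟩ := IsLocalization.map_units (Localization.AtPrime p.asIdeal)
    (⟨a, hap⟩ : p.asIdeal.primeCompl)
  have hzero (f : Localization.AtPrime p.asIdeal →ₗ[R] W) : f = 0 := by
    ext z
    have hz : a • (↑u⁻¹ * z) = z := by rw [Algebra.smul_def, ← hu, ← mul_assoc, u.mul_inv, one_mul]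
    rw [LinearMap.zero_apply, ← hz, map_smul, Module.mem_annihilator.1 ha]
  exact not_nontrivial_iff_subsingleton.2 ⟨fun f f' => (hzero f).trans (hzero f').symm⟩ hp

theorem coSupport_subset_of_injective {N : Type*} [AddCommGroup N] [Module R N]
    {φ : W →ₗ[R] N} (hφ : Function.Injective φ) : coSupport R W ⊆ coSupport R N := by
  intro p (hp : Nontrivial _)
  obtain ⟨f, hf⟩ := exists_ne (0 : Localization.AtPrime p.asIdeal →ₗ[R] W)
  exact nontrivial_of_ne (φ ∘ₗ f) 0 fun h => hf <| LinearMap.ext fun z =>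
    hφ (by simpa using LinearMap.congr_fun h z)

theorem mem_coSupport_of_annihilator_eq [IsArtinian R W] {p : PrimeSpectrum R}
    (hW : Module.annihilator R W = p.asIdeal) : p ∈ coSupport R W := by
  have hker : RingHom.ker (algebraMap R (Localization.AtPrime p.asIdeal)) ≤
      Module.annihilator R W := fun r hr => by
    obtain ⟨s, hs⟩ := (IsLocalization.map_eq_zero_iff p.asIdeal.primeCompl _ r).1 hr
    rw [hW]
    exact (p.isPrime.mem_or_mem (hs ▸ p.asIdeal.zero_mem)).resolve_left s.2
  obtain ⟨x, hx0, hx⟩ := IsArtinian.exists_ne_zero_forall_smul_eq p.asIdeal.primeCompl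
    fun s hs => by rwa [hW]
  obtain ⟨f, hf⟩ := IsArtinian.exists_linearMap_localization_apply_one hker hx
  exact nontrivial_of_ne f 0 fun h => hx0 (hf ▸ LinearMap.congr_fun h 1)

end

theorem coSupport_torsionBySet_eq_general
    (R M : Type*) [CommRing R]
    [AddCommGroup M] [Module R M] [IsArtinian R M]
    (h : ∀ p : Ideal R, p.IsPrime → Module.annihilator R M ≤ p →
      (Submodule.torsionBySet R M (p : Set R)).annihilator = p) :
    ∀ I : Ideal R,
      coSupport R (Submodule.torsionBySet R M (I : Set R))
        = coSupport R M ∩ {p : PrimeSpectrum R | I ≤ p.asIdeal} := by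
  intro I
  ext p
  constructor
  · intro hp
    refine ⟨coSupport_subset_of_injective (Submodule.injective_subtype _) hp, ?_⟩
    have hI : (I : Set R) ⊆ Module.annihilator R (Submodule.torsionBySet R M (I : Set R)) :=
      (Module.isTorsionBySet_iff_subset_annihilator _ _).1 (Submodule.torsionBySet_isTorsionBySet _)
    exact hI.trans (annihilator_le_of_mem_coSupport hp)
  · rintro ⟨hp, hIp⟩
    have hW := h p.asIdeal p.isPrime (annihilator_le_of_mem_coSupport hp)
    exact coSupport_subset_of_injective (Submodule.inclusion_injective
      (Submodule.torsionBySet_le_torsionBySet_of_subset hIp)) (mem_coSupport_of_annihilator_eq hW)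

/-- Let `R` be a Noetherian ring and `M` an Artinian `R`-module such that
`Ann_R(0 :_M p) = p` for every prime `p ⊇ Ann_R(M)`. Then for every ideal `I` of `R`,
`Cos_R(0 :_M I) = Cos_R(M) ∩ V(I)`. -/
theorem coSupport_torsionBySet_eq
    (R M : Type*) [CommRing R] [IsNoetherianRing R]
    [AddCommGroup M] [Module R M] [IsArtinian R M]
    (h : ∀ p : Ideal R, p.IsPrime → Module.annihilator R M ≤ p →
      (Submodule.torsionBySet R M (p : Set R)).annihilator = p) :
    ∀ I : Ideal R,
      coSupport R (Submodule.torsionBySet R M (I : Set R))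
        = coSupport R M ∩ {p : PrimeSpectrum R | I ≤ p.asIdeal} :=
  coSupport_torsionBySet_eq_general R M h
end

section
/- Let R be a Noetherian ring, M an Artinian R-module, and p a prime in the co-support of M. If every attached prime of M contained in p equals p itself, then the co-localized module Hom_R(R_p, M) has Att_{R_p}(Hom_R(R_p, M)) = {pR_p}, and hence its co-dimension over R_p is zero. -/
/-!
If `q ⊇ Ann_R M` is prime, choose `s ∉ q` with `sM` minimal among the `tM`, `t ∉ q` (`M` is
Artinian). Every `r ∉ q` then acts surjectively on `sM ≠ 0`, so the annihilator of every nonzero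
quotient of `sM` lies in `q`; a maximal such annihilator exists (`R` is Noetherian), is prime, and
is attached to `M` because `sM` is a quotient of `M`. Hence, under the hypothesis on `p`, `p` is
minimal over `Ann_R M`. As `Ann_R M` kills `Hom_R(R_p, M)`, every attached prime and every
co-support prime of the co-localization contracts to a prime between `Ann_R M` and `p`, i.e. to
`p`, and so equals `pR_p`; the co-support is the closed point, of dimension zero.
-/

/-- `p` is an attached prime of `M` iff `p` is prime and is the annihilator of some quotient
of `M`. -/
def IsAttachedPrime (R : Type*) [CommRing R] (M : Type*) [AddCommGroup M] [Module R M]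
    (p : Ideal R) : Prop :=
  p.IsPrime ∧ ∃ N : Submodule R M, Module.annihilator R (M ⧸ N) = p

/-- The co-dimension of an `R`-module `N`: `sup {dim R/p | p ∈ Cos_R N}`. -/
noncomputable def coDim (R : Type*) [CommRing R] (N : Type*) [AddCommGroup N] [Module R N] :
    WithBot (WithTop ℕ) :=
  sSup ((fun p : PrimeSpectrum R => ringKrullDim (R ⧸ p.asIdeal)) '' coSupport R N)

section

variable {R : Type*} [CommRing R] {M : Type*} [AddCommGroup M] [Module R M]
  (p : Ideal R) [p.IsPrime]

/-- The `R_p`-module structure on the co-localization `Hom_R(R_p, M)`, where `a ∈ R_p` acts by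
precomposition with multiplication by `a`. -/
noncomputable instance colocalizationModule :
    Module (Localization.AtPrime p) (Localization.AtPrime p →ₗ[R] M) where
  smul a f := f.comp (LinearMap.mulLeft R a)
  one_smul f := LinearMap.ext fun y => by show f (1 * y) = f y; rw [one_mul]
  mul_smul a b f := LinearMap.ext fun y => by
    show f (a * b * y) = f (b * (a * y)); congr 1; ring
  smul_zero a := LinearMap.ext fun y => rfl
  smul_add a f g := LinearMap.ext fun y => rfl
  add_smul a b f := LinearMap.ext fun y => by
    show f ((a + b) * y) = f (a * y) + f (b * y); rw [add_mul, map_add]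
  zero_smul f := LinearMap.ext fun y => by
    show f (0 * y) = 0; rw [zero_mul, map_zero]

end

open Submodule

section AttachedPrime

variable {R M M' : Type*} [CommRing R] [AddCommGroup M] [Module R M] [AddCommGroup M']
  [Module R M']

theorem Submodule.mem_annihilator_quotient {N : Submodule R M} {r : R} :
    r ∈ Module.annihilator R (M ⧸ N) ↔ ∀ x, r • x ∈ N := by
  simp [annihilator_quotient, mem_colon]

theorem IsAttachedPrime.annihilator_le {P : Ideal R} (hP : IsAttachedPrime R M P) :
    Module.annihilator R M ≤ P := by
  obtain ⟨-, N, rfl⟩ := hP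
  exact N.mkQ.annihilator_le_of_surjective N.mkQ_surjective

theorem IsAttachedPrime.of_surjective {P : Ideal R} (f : M →ₗ[R] M')
    (hf : Function.Surjective f) (hP : IsAttachedPrime R M' P) : IsAttachedPrime R M P := by
  obtain ⟨hprime, N, rfl⟩ := hP
  refine ⟨hprime, N.comap f, Ideal.ext fun r => ?_⟩
  simp only [mem_annihilator_quotient, mem_comap, map_smul]
  exact (hf.forall (p := fun y => r • y ∈ N)).symm

theorem IsAttachedPrime.le_of_surjective_smul {P q : Ideal R} (hP : IsAttachedPrime R M P)
    (hsurj : ∀ r ∉ q, Function.Surjective fun x : M => r • x) : P ≤ q := by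
  obtain ⟨hprime, N, rfl⟩ := hP
  intro r hr
  by_contra hrq
  refine hprime.ne_top ((Ideal.eq_top_iff_one _).2 (mem_annihilator_quotient.2 fun y => ?_))
  obtain ⟨x, rfl⟩ := hsurj r hrq y
  rw [one_smul]
  exact mem_annihilator_quotient.1 hr x

/-- A maximal element among the annihilators of the nonzero quotients of `M` is prime. -/
theorem exists_isAttachedPrime [IsNoetherianRing R] [Nontrivial M] :
    ∃ P, IsAttachedPrime R M P := by
  obtain ⟨_, ⟨N, hN, rfl⟩, hmax⟩ := set_has_maximal_iff_noetherian.2 ‹IsNoetherianRing R›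
    ((fun N : Submodule R M => Module.annihilator R (M ⧸ N)) '' {N | N ≠ ⊤})
    ⟨_, ⊥, bot_ne_top, rfl⟩
  refine ⟨_, Ideal.isPrime_iff.2 ⟨?_, fun {a b} hab => or_iff_not_imp_left.2 fun ha => ?_⟩, N, rfl⟩
  · rwa [ne_eq, Module.annihilator_eq_top_iff, Submodule.Quotient.subsingleton_iff]
  set Na := N.comap (LinearMap.lsmul R M a)
  have hNa : Na ≠ ⊤ := fun h => ha <| mem_annihilator_quotient.2 fun x => by
    simpa [Na] using (h ▸ mem_top : x ∈ Na)
  have hle : Module.annihilator R (M ⧸ N) ≤ Module.annihilator R (M ⧸ Na) :=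
    fun r hr => mem_annihilator_quotient.2 fun x => by
      rw [mem_comap, LinearMap.lsmul_apply, smul_comm]
      exact mem_annihilator_quotient.1 hr (a • x)
  have hb : b ∈ Module.annihilator R (M ⧸ Na) := mem_annihilator_quotient.2 fun x => by
    rw [mem_comap, LinearMap.lsmul_apply, smul_smul]
    exact mem_annihilator_quotient.1 hab x
  by_contra hbN
  exact hmax _ ⟨_, hNa, rfl⟩ (hle.lt_of_not_ge fun h => hbN (h hb))

theorem IsArtinian.exists_mem_surjective_smul_range [IsArtinian R M] (S : Submonoid R) :
    ∃ s ∈ S, ∀ r ∈ S,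
      Function.Surjective fun x : LinearMap.range (LinearMap.lsmul R M s) => r • x := by
  obtain ⟨_, ⟨s, hs, rfl⟩, hmin⟩ := IsArtinian.set_has_minimal
    ((fun s => LinearMap.range (LinearMap.lsmul R M s)) '' S) ⟨_, 1, S.one_mem, rfl⟩
  refine ⟨s, hs, fun r hr => ?_⟩
  rintro ⟨_, x, rfl⟩
  have hle : LinearMap.range (LinearMap.lsmul R M (r * s)) ≤
      LinearMap.range (LinearMap.lsmul R M s) := by
    rintro _ ⟨y, rfl⟩
    exact ⟨r • y, by simp [mul_smul, smul_comm r s]⟩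
  have hrs := eq_of_le_of_not_lt hle (hmin _ ⟨r * s, S.mul_mem hr hs, rfl⟩)
  obtain ⟨y, hy⟩ : s • x ∈ LinearMap.range (LinearMap.lsmul R M (r * s)) := hrs ▸ ⟨x, rfl⟩
  exact ⟨⟨s • y, y, rfl⟩, Subtype.ext (by simpa [mul_smul, smul_comm r s] using hy)⟩

theorem exists_isAttachedPrime_le [IsNoetherianRing R] [IsArtinian R M] {q : Ideal R} [q.IsPrime]
    (hq : Module.annihilator R M ≤ q) : ∃ P, IsAttachedPrime R M P ∧ P ≤ q := by
  obtain ⟨s, hs, hsurj⟩ := IsArtinian.exists_mem_surjective_smul_range (M := M) q.primeCompl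
  have : Nontrivial (LinearMap.range (LinearMap.lsmul R M s)) := by
    rw [nontrivial_iff_ne_bot, ne_eq, LinearMap.range_eq_bot]
    exact fun h => hs (hq (Module.mem_annihilator_iff_lsmul_eq_zero.2 h))
  obtain ⟨P, hP⟩ := exists_isAttachedPrime (R := R) (M := LinearMap.range (LinearMap.lsmul R M s))
  exact ⟨P, hP.of_surjective _ (LinearMap.surjective_rangeRestrict _),
    hP.le_of_surjective_smul hsurj⟩

end AttachedPrime

section CoSupport

variable {A N : Type*} [CommRing A] [AddCommGroup N] [Module A N]

theorem coSupport_subset_zeroLocus_annihilator :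
    coSupport A N ⊆ PrimeSpectrum.zeroLocus (Module.annihilator A N) := by
  intro Q hQ a ha
  by_contra haQ
  obtain ⟨u, hu⟩ := IsLocalization.map_units (Localization.AtPrime Q.asIdeal)
    (⟨a, haQ⟩ : Q.asIdeal.primeCompl)
  obtain ⟨φ, hφ⟩ := @exists_ne _ hQ 0
  refine hφ (LinearMap.ext fun x => ?_)
  have hx : x = a • ((↑u⁻¹ : Localization.AtPrime Q.asIdeal) * x) := by
    rw [Algebra.smul_def, ← hu, ← mul_assoc, Units.mul_inv, one_mul]
  rw [hx, map_smul, Module.mem_annihilator.1 ha, LinearMap.zero_apply]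

theorem closedPoint_mem_coSupport [IsLocalRing A] [Nontrivial N] :
    IsLocalRing.closedPoint A ∈ coSupport A N :=
  let e : A ≃ₗ[A] Localization.AtPrime (IsLocalRing.maximalIdeal A) :=
    (IsLocalization.atUnits A (IsLocalRing.maximalIdeal A).primeCompl
      fun _ hx => IsLocalRing.notMem_maximalIdeal.1 hx).toLinearEquiv
  ((LinearEquiv.arrowCongrAddEquiv e (LinearEquiv.refl A N)).symm.toEquiv.trans
    (LinearMap.ringLmapEquivSelf A A N).toEquiv).nontrivial

theorem coDim_eq_zero_of_coSupport_eq_closedPoint [IsLocalRing A]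
    (h : coSupport A N = {IsLocalRing.closedPoint A}) : coDim A N = 0 := by
  rw [coDim, h]
  exact (congrArg sSup Set.image_singleton).trans
    (sSup_singleton.trans (ringKrullDim_eq_zero_of_field (IsLocalRing.ResidueField A)))

end CoSupport

section Colocalization

variable {R M : Type*} [CommRing R] [AddCommGroup M] [Module R M] (p : Ideal R) [p.IsPrime]

theorem annihilator_le_comap_annihilator_colocalization :
    Module.annihilator R M ≤ (Module.annihilator (Localization.AtPrime p)
      (Localization.AtPrime p →ₗ[R] M)).comap (algebraMap R (Localization.AtPrime p)) := by
  intro r hr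
  rw [Ideal.mem_comap, Module.mem_annihilator]
  intro f
  ext x
  show f (algebraMap R _ r * x) = 0
  rw [← Algebra.smul_def, map_smul, Module.mem_annihilator.1 hr]

theorem eq_maximalIdeal_of_annihilator_colocalization_le [IsNoetherianRing R] [IsArtinian R M]
    (hatt : ∀ q : Ideal R, IsAttachedPrime R M q → q ≤ p → q = p)
    (P : Ideal (Localization.AtPrime p)) [P.IsPrime]
    (hP : Module.annihilator (Localization.AtPrime p) (Localization.AtPrime p →ₗ[R] M) ≤ P) :
    P = IsLocalRing.maximalIdeal (Localization.AtPrime p) := by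
  have hPp : Ideal.under R P ≤ p := (Ideal.comap_mono (IsLocalRing.le_maximalIdeal
    Ideal.IsPrime.ne_top')).trans Localization.AtPrime.under_maximalIdeal.le
  obtain ⟨q, hq, hqP⟩ := exists_isAttachedPrime_le
    ((annihilator_le_comap_annihilator_colocalization p).trans (Ideal.comap_mono hP))
  have hPp' : Ideal.under R P = p := le_antisymm hPp (hatt q hq (hqP.trans hPp) ▸ hqP)
  calc P = (Ideal.under R P).map (algebraMap R _) :=
        (IsLocalization.map_under p.primeCompl _ P).symm
    _ = IsLocalRing.maximalIdeal _ := by rw [hPp', Localization.AtPrime.map_eq_maximalIdeal]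

end Colocalization

/-- Let `R` be a Noetherian ring, `M` an Artinian `R`-module, and `p` a prime
in the co-support of `M`. If every attached prime of `M` contained in `p` equals `p`, then
`Att_{R_p}(Hom_R(R_p, M)) = {p R_p}` and the co-dimension of `Hom_R(R_p, M)` over `R_p` is
zero. -/
theorem attached_primes_and_coDim_of_colocalization
    (R M : Type*) [CommRing R] [IsNoetherianRing R]
    [AddCommGroup M] [Module R M] [IsArtinian R M]
    (p : Ideal R) [hp : p.IsPrime]
    (hcos : (⟨p, hp⟩ : PrimeSpectrum R) ∈ coSupport R M)
    (hatt : ∀ q : Ideal R, IsAttachedPrime R M q → q ≤ p → q = p) :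
    {P : Ideal (Localization.AtPrime p) |
        IsAttachedPrime (Localization.AtPrime p) (Localization.AtPrime p →ₗ[R] M) P}
      = {p.map (algebraMap R (Localization.AtPrime p))} ∧
    coDim (Localization.AtPrime p) (Localization.AtPrime p →ₗ[R] M) = 0 := by
  have : Nontrivial (Localization.AtPrime p →ₗ[R] M) := hcos
  have hmax := eq_maximalIdeal_of_annihilator_colocalization_le p hatt
  have hatt_eq (P) (hP : IsAttachedPrime (Localization.AtPrime p)
      (Localization.AtPrime p →ₗ[R] M) P) : P = IsLocalRing.maximalIdeal _ :=
    have := hP.1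
    hmax P hP.annihilator_le
  have hcos_eq : coSupport (Localization.AtPrime p) (Localization.AtPrime p →ₗ[R] M) =
      {IsLocalRing.closedPoint _} :=
    Set.Subset.antisymm
      (fun Q hQ => PrimeSpectrum.ext (hmax Q.asIdeal (coSupport_subset_zeroLocus_annihilator hQ)))
      (Set.singleton_subset_iff.2 closedPoint_mem_coSupport)
  obtain ⟨P₀, hP₀⟩ := exists_isAttachedPrime (R := Localization.AtPrime p)
    (M := Localization.AtPrime p →ₗ[R] M)
  rw [Localization.AtPrime.map_eq_maximalIdeal]
  exact ⟨Set.eq_singleton_iff_unique_mem.2 ⟨hatt_eq P₀ hP₀ ▸ hP₀, hatt_eq⟩,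
    coDim_eq_zero_of_coSupport_eq_closedPoint hcos_eq⟩
end

section
/- Let R be a Noetherian ring and M a nonzero Artinian R-module. Then every maximal M-co-regular sequence x_1, ..., x_t contained in a prime p ∈ Cos_R(M) is entirely contained in some single maximal ideal m ∈ Supp_R(M). -/
/-- `(0 :_M (x_1, …, x_k))`, the annihilator in `M` of the first `k` terms of the sequence. -/
def seqAnn (R : Type*) [CommRing R] (M : Type*) [AddCommGroup M] [Module R M]
    {t : ℕ} (x : Fin t → R) (k : ℕ) : Submodule R M :=
  Submodule.torsionBySet R M ((Ideal.span (x '' {i : Fin t | (i : ℕ) < k}) : Ideal R) : Set R)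

section Aux

variable {R : Type*} [CommRing R]

/-- An associated prime of an Artinian module is maximal. -/
lemma IsAssociatedPrime.isMaximal_of_isArtinian
    {M : Type*} [AddCommGroup M] [Module R M] [IsArtinian R M]
    {q : Ideal R} (h : IsAssociatedPrime q M) : q.IsMaximal := by
  obtain ⟨hq, n, hqe⟩ := h
  have e : q = (Ideal.torsionOf R M n).radical := by
    rw [hqe]; congr 1; ext r
    rw [Submodule.mem_colon_singleton, Submodule.mem_bot, Ideal.mem_torsionOf_iff]
  haveI h1 : IsArtinian R (R ⧸ q) := by
    have hle : Ideal.torsionOf R M n ≤ q := e ▸ Ideal.le_radical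
    haveI : IsArtinian R (R ⧸ Ideal.torsionOf R M n) :=
      isArtinian_of_linearEquiv (Ideal.quotTorsionOfEquivSpanSingleton R M n).symm
    refine isArtinian_of_surjective (R ⧸ Ideal.torsionOf R M n)
      (Submodule.liftQ (Ideal.torsionOf R M n) (Submodule.mkQ q)
      (by rw [Submodule.ker_mkQ]; exact hle)) ?_
    intro y
    obtain ⟨r, rfl⟩ := Submodule.Quotient.mk_surjective _ y
    exact ⟨Submodule.Quotient.mk r, rfl⟩
  haveI h2 : IsArtinianRing (R ⧸ q) := isArtinian_of_tower R h1
  haveI : q.IsPrime := hq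
  haveI : IsDomain (R ⧸ q) := Ideal.Quotient.isDomain q
  haveI : (⊥ : Ideal (R ⧸ q)).IsPrime := Ideal.bot_prime
  haveI : (⊥ : Ideal (R ⧸ q)).IsMaximal := IsArtinianRing.isMaximal_of_isPrime ⊥
  exact (Ideal.bot_quotient_isMaximal_iff q).mp this

/-- An Artinian module over a Noetherian ring has finitely many associated primes. -/
lemma associatedPrimes_finite_of_isArtinian [IsNoetherianRing R]
    (M : Type*) [AddCommGroup M] [Module R M] [IsArtinian R M] :
    (associatedPrimes R M).Finite := by
  classical
  by_contra hinf
  have hinf' : (associatedPrimes R M).Infinite := hinf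
  set e := hinf'.natEmbedding with he
  set q : ℕ → Ideal R := fun i => (e i : Ideal R) with hqdef
  have hq : ∀ i : ℕ, IsAssociatedPrime (q i) M := fun i => (e i).2
  have hqinj : Function.Injective q := fun i j hij =>
    e.injective (Subtype.coe_injective hij)
  choose n hn using fun i => ((isAssociatedPrime_iff).mp (hq i)).2
  have hqmax : ∀ i, (q i).IsMaximal := fun i => (hq i).isMaximal_of_isArtinian
  -- for i ≠ k, pick an element of `q i` not in `q k`
  have hwex : ∀ k i : ℕ, ∃ w : R, i ≠ k → w ∈ q i ∧ w ∉ q k := by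
    intro k i
    by_cases h : i = k
    · exact ⟨1, fun h' => absurd h h'⟩
    · have hne : ¬ q i ≤ q k := by
        intro hle
        exact h (hqinj ((hqmax i).eq_of_le (hqmax k).ne_top hle))
      obtain ⟨w, hw1, hw2⟩ := SetLike.not_le_iff_exists.mp hne
      exact ⟨w, fun _ => ⟨hw1, hw2⟩⟩
  choose w hw using hwex
  -- the descending chain of spans of tails
  set g : ℕ → Submodule R M := fun k => Submodule.span R (n '' {i | k ≤ i}) with hg
  have hmono : ∀ a b : ℕ, a ≤ b → g b ≤ g a := by
    intro a b hab
    exact Submodule.span_mono (Set.image_mono fun i (hi : b ≤ i) => hab.trans hi)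
  obtain ⟨k, hk⟩ := IsArtinian.monotone_stabilizes
    (⟨fun k => OrderDual.toDual (g k), fun a b hab => hmono a b hab⟩ : ℕ →o (Submodule R M)ᵒᵈ)
  have hkk : g k = g (k + 1) := hk (k + 1) (Nat.le_succ k)
  have hnk : n k ∈ g (k + 1) := by
    rw [← hkk]
    exact Submodule.subset_span ⟨k, le_refl k, rfl⟩
  rw [hg] at hnk
  obtain ⟨c, hcsupp, hcsum⟩ := Submodule.mem_span_set.mp hnk
  -- choose for each element of the support an index
  have hsel : ∀ z : M, ∃ i : ℕ, z ∈ c.support → (k + 1 ≤ i ∧ n i = z) := by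
    intro z
    by_cases h : z ∈ c.support
    · obtain ⟨i, hi, hni⟩ := hcsupp h
      exact ⟨i, fun _ => ⟨hi, hni⟩⟩
    · exact ⟨0, fun hz => absurd hz h⟩
  choose idx hidx using hsel
  set a : R := ∏ z ∈ c.support, w k (idx z) with ha
  have hank : a ∉ q k := by
    intro hmem
    obtain ⟨z, hz, hzmem⟩ := (Ideal.IsPrime.prod_mem_iff (hp := (hqmax k).isPrime)).mp hmem
    have h1 : idx z ≠ k := by
      have := (hidx z hz).1; omega
    exact (hw k (idx z) h1).2 hzmem
  -- but `a` kills `n k`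
  have hkill : a • n k = 0 := by
    rw [← hcsum, Finsupp.smul_sum]
    rw [Finsupp.sum]
    apply Finset.sum_eq_zero
    intro z hz
    have h1 : idx z ≠ k := by
      have := (hidx z hz).1; omega
    have hzw : w k (idx z) • z = 0 := by
      have hmem : w k (idx z) ∈ q (idx z) := (hw k (idx z) h1).1
      rw [hn (idx z), Submodule.mem_colon_singleton, Submodule.mem_bot, (hidx z hz).2] at hmem
      exact hmem
    have hae : a = (∏ x ∈ c.support.erase z, w k (idx x)) * w k (idx z) :=
      (Finset.prod_erase_mul _ _ hz).symm
    rw [hae, mul_smul, smul_comm (w k (idx z)) (c z) z, hzw, smul_zero, smul_zero]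
  have : a ∈ q k := by
    rw [hn k, Submodule.mem_colon_singleton, Submodule.mem_bot]
    exact hkill
  exact hank this

end Aux

/-- Let `R` be Noetherian and `M` a nonzero Artinian `R`-module. Every
maximal `M`-co-regular sequence `x_1, …, x_t` contained in a prime `p ∈ Cos_R M` is entirely
contained in a single maximal ideal `m ∈ Supp_R M`. -/
theorem maximal_coregular_sequence_in_single_maximal_ideal
    (R M : Type*) [CommRing R] [IsNoetherianRing R]
    [AddCommGroup M] [Module R M] [IsArtinian R M] [Nontrivial M]
    (p : PrimeSpectrum R) (hp : p ∈ coSupport R M)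
    (t : ℕ) (x : Fin t → R) (hxp : ∀ i, x i ∈ p.asIdeal)
    (hreg : ∀ k : Fin t, seqAnn R M x (k : ℕ) ≠ ⊥ ∧
      ∀ u ∈ seqAnn R M x (k : ℕ), ∃ v ∈ seqAnn R M x (k : ℕ), x k • v = u)
    (hlast : seqAnn R M x t ≠ ⊥)
    (hmaxl : ¬ ∃ y ∈ p.asIdeal,
      ∀ u ∈ seqAnn R M x t, ∃ v ∈ seqAnn R M x t, y • v = u) :
    ∃ m : PrimeSpectrum R, m.asIdeal.IsMaximal ∧ m ∈ Module.support R M ∧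
      ∀ i, x i ∈ m.asIdeal := by
  set N : Submodule R M := seqAnn R M x t with hN
  -- no element of `p` acts surjectively on `N`
  have hsurj : ∀ y ∈ p.asIdeal, ¬ Function.Surjective (LinearMap.lsmul R ↥N y) := by
    intro y hy hsur
    refine hmaxl ⟨y, hy, fun u hu => ?_⟩
    obtain ⟨v, hv⟩ := hsur ⟨u, hu⟩
    exact ⟨(v : M), v.2, congrArg Subtype.val hv⟩
  -- hence every element of `p` lies in an associated prime of `N`
  have hcov : ∀ y ∈ p.asIdeal, ∃ q ∈ associatedPrimes R ↥N, y ∈ q := by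
    intro y hy
    have hni : ¬ Function.Injective (LinearMap.lsmul R ↥N y) := fun hinj =>
      hsurj y hy (IsArtinian.surjective_of_injective_endomorphism _ hinj)
    have hker : LinearMap.ker (LinearMap.lsmul R ↥N y) ≠ ⊥ := by
      intro h
      exact hni (LinearMap.ker_eq_bot.mp h)
    obtain ⟨u, humem, hune⟩ := Submodule.exists_mem_ne_zero_of_ne_bot hker
    have hyu : y • u = 0 := by
      simpa using LinearMap.mem_ker.mp humem
    obtain ⟨P, hP, hle⟩ := exists_le_isAssociatedPrime_of_isNoetherianRing R u hune
    refine ⟨P, hP, hle ?_⟩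
    rw [Submodule.mem_colon_singleton, Submodule.mem_bot]
    exact hyu
  have hfin : (associatedPrimes R ↥N).Finite := associatedPrimes_finite_of_isArtinian ↥N
  have hsub : (p.asIdeal : Set R) ⊆ ⋃ q ∈ (hfin.toFinset : Set (Ideal R)), ((q : Ideal R) : Set R) := by
    intro y hy
    obtain ⟨q, hqS, hyq⟩ := hcov y hy
    exact Set.mem_biUnion (hfin.mem_toFinset.mpr hqS) hyq
  obtain ⟨q, hqF, hpq⟩ := (Ideal.subset_union_prime (f := fun q : Ideal R => q) ⊥ ⊥
    (fun q hq _ _ => (hfin.mem_toFinset.mp hq).isPrime)).mp hsub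
  have hqS : q ∈ associatedPrimes R ↥N := hfin.mem_toFinset.mp hqF
  have hqmax : q.IsMaximal := hqS.isMaximal_of_isArtinian
  have hqM : IsAssociatedPrime q M := hqS.map_of_injective N.subtype Subtype.coe_injective
  have hsupp : (⟨q, hqmax.isPrime⟩ : PrimeSpectrum R) ∈ Module.support R M := by
    obtain ⟨_, m0, hm0⟩ := hqM
    exact Module.mem_support_iff_exists_annihilator.mpr ⟨m0, fun r hr => by
      show r ∈ q
      rw [hm0]
      exact Ideal.le_radical (by
        rw [Submodule.mem_colon_singleton, Submodule.mem_bot]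
        exact (Submodule.mem_annihilator_span_singleton _ _).mp hr)⟩
  exact ⟨⟨q, hqmax.isPrime⟩, hqmax, hsupp, fun i => hpq (hxp i)⟩
end
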